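/- arXiv:2012.09482 — 2 statements merged into one kernel-verified Lean document; each statement's English description precedes it below -/
import Mathlib

section
/- Let (X,T) be a topological dynamical system satisfying the almost product property. Then the measure center C_T(X) equals the closure of the set of almost periodic points: C_T(X) = closure(AP). -/
open Filter MeasureTheory Topology
open scoped ENNReal

variable {X : Type*} [MetricSpace X]

variable [MeasurableSpace X] [BorelSpace X]

/-- A probability measure is invariant under `T`. -/
def InvariantProb (T : X → X) (μ : MeasureTheory.ProbabilityMeasure X) : Prop :=
  μ.toMeasure.map T = μ.toMeasure

/-- The `n`-th empirical measure of `x`: the average of Dirac masses along the orbit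
segment `x, Tx, …, T^n x` (of length `n+1`, so that it is defined for every `n`). -/
noncomputable def empirical (T : X → X) (x : X) (n : ℕ) :
    MeasureTheory.ProbabilityMeasure X :=
  ⟨((n + 1 : ℝ≥0∞))⁻¹ • ∑ j ∈ Finset.range (n + 1), MeasureTheory.Measure.dirac (T^[j] x), by
    constructor
    simp [MeasureTheory.Measure.smul_apply, smul_eq_mul]
    rw [ENNReal.inv_mul_cancel] <;> simp⟩

/-- The set `M_x` of weak* limit points of the empirical measures of `x`. -/
def limitMeasures (T : X → X) (x : X) : Set (MeasureTheory.ProbabilityMeasure X) :=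
  {μ | MapClusterPt μ Filter.atTop (fun n => empirical T x n)}

/-- The saturated set `G_K = {x : M_x = K}`. -/
def saturated (T : X → X) (K : Set (MeasureTheory.ProbabilityMeasure X)) : Set X :=
  {x | limitMeasures T x = K}

/-- The support of a probability measure. -/
def measSupp (μ : MeasureTheory.ProbabilityMeasure X) : Set X :=
  {x | ∀ U : Set X, IsOpen U → x ∈ U → 0 < μ.toMeasure U}

/-- The measure center: the closure of the union of supports of invariant measures. -/
noncomputable def measureCenter (T : X → X) : Set X :=
  closure (⋃ (μ : MeasureTheory.ProbabilityMeasure X) (_ : InvariantProb T μ), measSupp μ)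

/-- `β(f)`: the supremum of `∫ f dμ` over invariant probability measures. -/
noncomputable def birkhoffSup (T : X → X) (f : X → ℝ) : ℝ :=
  sSup {r : ℝ | ∃ ν : MeasureTheory.ProbabilityMeasure X,
    InvariantProb T ν ∧ r = ∫ x, f x ∂ν.toMeasure}

/-- The set of initial values of measure-recurrent `f`-optimal orbits: points whose
empirical measures converge to an invariant measure in whose support they lie, and whose
Birkhoff averages of `f` converge to `β(f)`. -/
def mrOptimal (T : X → X) (f : X → ℝ) : Set X :=
  {x | (∃ μ : MeasureTheory.ProbabilityMeasure X,
          Filter.Tendsto (fun n => empirical T x n) Filter.atTop (nhds μ) ∧ x ∈ measSupp μ) ∧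
    Filter.Tendsto (fun n => (∑ i ∈ Finset.range n, f (T^[i] x)) / n)
      Filter.atTop (nhds (birkhoffSup T f))}
/-- The mistake Bowen ball (the `g`-blowup of `B_n(x,ε)`). -/
def mistakeBall (T : X → X) (g : ℕ → ℕ) (x : X) (n : ℕ) (ε : ℝ) : Set X :=
  {y | ∃ Λ : Finset ℕ, Λ ⊆ Finset.range n ∧ (Finset.range n \ Λ).card ≤ g n ∧
    ∀ j ∈ Λ, dist (T^[j] x) (T^[j] y) ≤ ε}

/-- The almost product property of Pfister–Sullivan, with a blowup function `g` and a
gap function `m`. -/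
def AlmostProductProperty (T : X → X) : Prop :=
  ∃ g : ℕ → ℕ, ∃ m : ℝ → ℕ,
    Monotone g ∧ (∀ N : ℕ, ∃ n : ℕ, N ≤ g n) ∧ (∀ n : ℕ, 1 ≤ n → g n < n) ∧
    Filter.Tendsto (fun n : ℕ => (g n : ℝ) / n) Filter.atTop (nhds 0) ∧
    (∀ ε δ : ℝ, 0 < ε → ε ≤ δ → m δ ≤ m ε) ∧
    ∀ (k : ℕ) (x : ℕ → X) (ε : ℕ → ℝ) (n : ℕ → ℕ), 2 ≤ k →
      (∀ j < k, 0 < ε j) → (∀ j < k, m (ε j) ≤ n j) →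
      (⋂ j ∈ Finset.range k,
        (T^[∑ i ∈ Finset.range j, n i]) ⁻¹' mistakeBall T g (x j) (n j) (ε j)).Nonempty
/-- The set of almost periodic points. -/
def almostPeriodicPts (T : X → X) : Set X :=
  {x | ∀ U : Set X, IsOpen U → x ∈ U →
    ∃ N : ℕ, ∀ n : ℕ, ∃ k : ℕ, n ≤ k ∧ k ≤ n + N ∧ T^[k] x ∈ U}

/-!
An almost periodic point `x` lies in the measure center: a weak* limit of the empirical measures
of `x` is invariant (Krylov–Bogolyubov), and it charges every neighbourhood of `x`, because the
orbit of `x` returns there with bounded gaps.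

Conversely, let `x` lie in the support of an invariant measure `μ` and let `B` be a small ball
around `x`. By invariance some orbit segment of length `L` visits `B` more than `g L` times, `g`
being the blowup function, so the almost product property yields points shadowing arbitrarily
many concatenated copies of this segment, each copy still passing near `x` despite the allowed
mistakes. A limit of these points returns near `x` with gaps at most `2 L`; the closed invariant
set of such points contains a minimal set, and points of minimal sets are almost periodic.
-/

open Set

section Visits

variable {Y : Type*} (T : Y → Y)

open scoped Classical in
noncomputable def visitCount (x : Y) (S : Set Y) (n : ℕ) : ℕ :=
  ((Finset.range n).filter fun j => T^[j] x ∈ S).card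

def syndeticVisitors (S : Set Y) (N : ℕ) : Set Y :=
  {x | ∀ n, ∃ k, n ≤ k ∧ k ≤ n + N ∧ T^[k] x ∈ S}

variable {T} {x : Y} {S : Set Y} {N : ℕ}

lemma syndeticVisitors_mono {S' : Set Y} (h : S ⊆ S') :
    syndeticVisitors T S N ⊆ syndeticVisitors T S' N :=
  fun _ hx n => (hx n).imp fun _ hk => ⟨hk.1, hk.2.1, h hk.2.2⟩

lemma mapsTo_syndeticVisitors : MapsTo T (syndeticVisitors T S N) (syndeticVisitors T S N) := by
  intro y hy n
  obtain ⟨k, hk_ge, hk_le, hk⟩ := hy (n + 1)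
  refine ⟨k - 1, by omega, by omega, ?_⟩
  rwa [← Function.iterate_succ_apply, Nat.succ_eq_add_one, Nat.sub_add_cancel (by omega)]

lemma div_le_visitCount (hx : x ∈ syndeticVisitors T S N) (n : ℕ) :
    n / (N + 1) ≤ visitCount T x S n := by
  classical
  choose k hk_ge hk_le hk_mem using fun i => hx (i * (N + 1))
  have hk_div : ∀ i, k i / (N + 1) = i := fun i =>
    Nat.div_eq_of_lt_le (hk_ge i) (by linarith [hk_le i])
  calc n / (N + 1) = (Finset.range (n / (N + 1))).card := (Finset.card_range _).symm
    _ ≤ visitCount T x S n := by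
      refine Finset.card_le_card_of_injOn k (fun i hi => ?_)
        (Function.LeftInverse.injective (g := (· / (N + 1))) hk_div).injOn
      simp only [Finset.coe_range, mem_Iio] at hi
      have : (i + 1) * (N + 1) ≤ n := calc
        (i + 1) * (N + 1) ≤ n / (N + 1) * (N + 1) := Nat.mul_le_mul_right _ hi
        _ ≤ n := Nat.div_mul_le_self n (N + 1)
      simp only [Finset.coe_filter, Finset.mem_range, mem_ofPred_eq]
      exact ⟨by linarith [hk_le i], hk_mem i⟩

lemma le_two_mul_visitCount (hx : x ∈ syndeticVisitors T S N) {n : ℕ} (hn : N + 1 ≤ n) :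
    n ≤ 2 * (N + 1) * visitCount T x S n := by
  have hq : 1 ≤ n / (N + 1) := (Nat.le_div_iff_mul_le (by omega)).mpr (by omega)
  have hn_lt : n < n / (N + 1) * (N + 1) + (N + 1) := Nat.lt_div_mul_add (by omega)
  nlinarith [div_le_visitCount hx n]

lemma visitCount_eq_sum_indicator (x : Y) (n : ℕ) :
    (visitCount T x S n : ℝ≥0∞) = ∑ j ∈ Finset.range n, S.indicator 1 (T^[j] x) := by
  classical
  simp [visitCount, Set.indicator_apply, Finset.sum_boole]

end Visits

section Counting

variable {Y : Type*} [MeasurableSpace Y] {T : Y → Y} {S : Set Y}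

lemma lintegral_visitCount {μ : Measure Y} (hμ : MeasurePreserving T μ μ)
    (hS : MeasurableSet S) (n : ℕ) :
    ∫⁻ x, (visitCount T x S n : ℝ≥0∞) ∂μ = n * μ S := by
  simp_rw [visitCount_eq_sum_indicator]
  rw [lintegral_finsetSum' (f := fun j x => S.indicator 1 (T^[j] x)) _ fun j _ =>
    ((measurable_one.indicator hS).comp (hμ.measurable.iterate j)).aemeasurable]
  simp [(hμ.iterate _).lintegral_comp (measurable_one.indicator hS), lintegral_indicator_one hS]

lemma exists_lt_visitCount {μ : Measure Y} [IsProbabilityMeasure μ]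
    (hμ : MeasurePreserving T μ μ) (hS : MeasurableSet S) {b L : ℕ}
    (hb : (b : ℝ≥0∞) < L * μ S) : ∃ w, b < visitCount T w S L := by
  obtain ⟨w, hw⟩ := exists_lintegral_le (f := fun w => (visitCount T w S L : ℝ≥0∞))
    (μ := μ) (by simp [lintegral_visitCount hμ hS, ENNReal.mul_eq_top])
  rw [lintegral_visitCount hμ hS] at hw
  exact ⟨w, by exact_mod_cast hb.trans_le hw⟩

lemma empirical_apply (hS : MeasurableSet S) (x : Y) (n : ℕ) :
    (empirical T x n : Measure Y) S = visitCount T x S (n + 1) / (n + 1) := by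
  simp [empirical, Measure.coe_finsetSum, Measure.dirac_apply' _ hS,
    visitCount_eq_sum_indicator, ENNReal.div_eq_inv_mul]

lemma inv_le_empirical_apply {x : Y} {N : ℕ} (hx : x ∈ syndeticVisitors T S N)
    (hS : MeasurableSet S) {n : ℕ} (hn : N ≤ n) :
    ((2 * (N + 1) : ℕ) : ℝ≥0∞)⁻¹ ≤ (empirical T x n : Measure Y) S := by
  rw [empirical_apply hS, ENNReal.le_div_iff_mul_le (by simp) (by simp), mul_comm,
    ← div_eq_mul_inv]
  refine ENNReal.div_le_of_le_mul ?_
  rw [mul_comm]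
  exact_mod_cast le_two_mul_visitCount hx (Nat.succ_le_succ hn)

end Counting

section KrylovBogolyubov

open BoundedContinuousFunction

variable {Y : Type*} [TopologicalSpace Y] [MeasurableSpace Y] [BorelSpace Y]
  {T : Y → Y} {x : Y}

lemma integral_empirical (f : Y →ᵇ ℝ) (n : ℕ) :
    ∫ y, f y ∂(empirical T x n : Measure Y) =
      (n + 1 : ℝ)⁻¹ * ∑ j ∈ Finset.range (n + 1), f (T^[j] x) := by
  have hf : StronglyMeasurable f := f.continuous.measurable.stronglyMeasurable
  simp [empirical, integral_smul_measure,
    integral_finsetSum_measure fun j _ => f.integrable (Measure.dirac (T^[j] x)),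
    integral_dirac' _ _ hf, ENNReal.toReal_add]

lemma tendsto_integral_map_empirical_sub (hT : Continuous T) (f : Y →ᵇ ℝ) :
    Tendsto (fun n => ∫ y, f y ∂((empirical T x n).map hT.aemeasurable : Measure Y) -
      ∫ y, f y ∂(empirical T x n : Measure Y)) atTop (𝓝 0) := by
  have h_telescope : ∀ n : ℕ, ∫ y, f y ∂((empirical T x n).map hT.aemeasurable : Measure Y) -
      ∫ y, f y ∂(empirical T x n : Measure Y) = (n + 1 : ℝ)⁻¹ * (f (T^[n + 1] x) - f x) := by
    intro n
    have h_comp := integral_empirical (T := T) (x := x) (f.compContinuous ⟨T, hT⟩) n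
    simp only [compContinuous_apply, ContinuousMap.coe_mk] at h_comp
    rw [ProbabilityMeasure.toMeasure_map, integral_map hT.aemeasurable
      f.continuous.aestronglyMeasurable, h_comp, integral_empirical, ← mul_sub,
      ← Finset.sum_sub_distrib]
    congr 1
    simpa only [Function.iterate_succ_apply', Function.iterate_zero_apply] using
      Finset.sum_range_sub (fun j => f (T^[j] x)) (n + 1)
  simp_rw [h_telescope]
  refine squeeze_zero_norm (fun n => ?_)
    (by simpa using (tendsto_one_div_add_atTop_nhds_zero_nat (𝕜 := ℝ)).const_mul (2 * ‖f‖))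
  rw [norm_mul, norm_inv, ← dist_eq_norm, mul_comm, Real.norm_of_nonneg (by positivity)]
  gcongr
  exact f.dist_le_two_norm _ _

lemma invariantProb_of_tendsto_empirical [HasOuterApproxClosed Y] (hT : Continuous T)
    {l : Filter ℕ} [l.NeBot] (hl : l ≤ atTop) {μ : ProbabilityMeasure Y}
    (hμ : Tendsto (empirical T x) l (𝓝 μ)) :
    InvariantProb T μ := by
  have h_map : Tendsto (fun n => (empirical T x n).map hT.aemeasurable) l
      (𝓝 (μ.map hT.aemeasurable)) :=
    ((ProbabilityMeasure.continuous_map hT).tendsto μ).comp hμ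
  have h_map' : Tendsto (fun n => (empirical T x n).map hT.aemeasurable) l (𝓝 μ) := by
    rw [ProbabilityMeasure.tendsto_iff_forall_integral_tendsto] at hμ ⊢
    intro f
    simpa using (hμ f).add ((tendsto_integral_map_empirical_sub (x := x) hT f).mono_left hl)
  rw [InvariantProb, ← ProbabilityMeasure.toMeasure_map _ hT.aemeasurable,
    tendsto_nhds_unique h_map h_map']

lemma measure_pos_of_tendsto_empirical [HasOuterApproxClosed Y] {l : Filter ℕ} [l.NeBot]
    (hl : l ≤ atTop) {μ : ProbabilityMeasure Y} (hμ : Tendsto (empirical T x) l (𝓝 μ)) {F : Set Y}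
    (hF : IsClosed F) {N : ℕ} (hx : x ∈ syndeticVisitors T F N) :
    0 < (μ : Measure Y) F := calc
  0 < ((2 * (N + 1) : ℕ) : ℝ≥0∞)⁻¹ := ENNReal.inv_pos.mpr (ENNReal.natCast_ne_top _)
  _ ≤ l.limsup fun n => (empirical T x n : Measure Y) F :=
    le_limsup_of_frequently_le (((eventually_ge_atTop N).mono fun _ hn =>
      inv_le_empirical_apply hx hF.measurableSet hn).filter_mono hl).frequently
  _ ≤ (μ : Measure Y) F := ProbabilityMeasure.limsup_measure_closed_le_of_tendsto hμ hF

end KrylovBogolyubov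

section AlmostPeriodicInCenter

variable {Y : Type*} [MetricSpace Y] [MeasurableSpace Y] [BorelSpace Y] {T : Y → Y} {x : Y}

lemma exists_invariantProb_mem_measSupp [CompactSpace Y] (hT : Continuous T)
    (hx : x ∈ almostPeriodicPts T) : ∃ μ, InvariantProb T μ ∧ x ∈ measSupp μ := by
  obtain ⟨μ, -, hμ⟩ := isCompact_univ.ultrafilter_le_nhds
    ((Ultrafilter.of atTop).map (empirical T x)) (by simp)
  refine ⟨μ, invariantProb_of_tendsto_empirical hT (Ultrafilter.of_le _) hμ, ?_⟩
  intro U hU hxU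
  obtain ⟨r, hr, hrU⟩ := Metric.isOpen_iff.mp hU x hxU
  obtain ⟨N, hN⟩ := hx _ Metric.isOpen_ball (Metric.mem_ball_self (half_pos hr))
  refine (measure_pos_of_tendsto_empirical (Ultrafilter.of_le _) hμ Metric.isClosed_closedBall
    (syndeticVisitors_mono Metric.ball_subset_closedBall hN)).trans_le (measure_mono ?_)
  exact (Metric.closedBall_subset_ball (half_lt_self hr)).trans hrU

end AlmostPeriodicInCenter

section MinimalSets

variable {Y : Type*} [TopologicalSpace Y] {T : Y → Y}

abbrev IsMinimalSet (T : Y → Y) (M : Set Y) : Prop :=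
  Minimal (fun B : Set Y => B.Nonempty ∧ IsClosed B ∧ MapsTo T B B) M

lemma exists_isMinimalSet_subset [CompactSpace Y] {A : Set Y} (hne : A.Nonempty)
    (hA : IsClosed A) (hTA : MapsTo T A A) : ∃ M ⊆ A, IsMinimalSet T M := by
  refine zorn_superset_nonempty _ (fun c hc hchain hcne => ?_) A ⟨hne, hA, hTA⟩
  refine ⟨⋂₀ c, ⟨?_, isClosed_sInter fun B hB => (hc hB).2.1,
    fun y hy => mem_sInter.mpr fun B hB => (hc hB).2.2 (hy B hB)⟩,
    fun B hB => sInter_subset_of_mem hB⟩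
  have := hcne.coe_sort
  rw [sInter_eq_iInter]
  exact IsCompact.nonempty_iInter_of_directed_nonempty_isCompact_isClosed _
    (fun B B' => (hchain.total B.2 B'.2).elim (fun h => ⟨B, le_rfl, h⟩) fun h => ⟨B', h, le_rfl⟩)
    (fun B => (hc B.2).1) (fun B => (hc B.2).2.1.isCompact) (fun B => (hc B.2).2.1)

lemma IsMinimalSet.subset_iUnion_preimage_iterate (hT : Continuous T) {M : Set Y}
    (hM : IsMinimalSet T M) {U : Set Y} (hU : IsOpen U) (hMU : (M ∩ U).Nonempty) :
    M ⊆ ⋃ k, T^[k] ⁻¹' U := by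
  by_contra h_not
  obtain ⟨q, hqM, hq⟩ := not_subset.mp h_not
  have hM' : (M ∩ ⋂ k, T^[k] ⁻¹' Uᶜ).Nonempty ∧ IsClosed (M ∩ ⋂ k, T^[k] ⁻¹' Uᶜ) ∧
      MapsTo T (M ∩ ⋂ k, T^[k] ⁻¹' Uᶜ) (M ∩ ⋂ k, T^[k] ⁻¹' Uᶜ) := by
    refine ⟨⟨q, hqM, by simpa using hq⟩,
      hM.prop.2.1.inter (isClosed_iInter fun k => hU.isClosed_compl.preimage (hT.iterate k)),
      fun y hy => ⟨hM.prop.2.2 hy.1, mem_iInter.mpr fun k => ?_⟩⟩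
    have := mem_iInter.mp hy.2 (k + 1)
    rwa [mem_preimage, Function.iterate_succ_apply] at this
  obtain ⟨p, hpM, hpU⟩ := hMU
  exact mem_iInter.mp (hM.2 hM' inter_subset_left hpM).2 0 hpU

end MinimalSets

section SyndeticVisitors

variable {Y : Type*} [TopologicalSpace Y] {T : Y → Y} {F : Set Y} {N : ℕ}

lemma isClosed_setOf_exists_iterate_mem (hT : Continuous T) (hF : IsClosed F) (n : ℕ) :
    IsClosed {y | ∃ k, n ≤ k ∧ k ≤ n + N ∧ T^[k] y ∈ F} := by
  convert (Finset.Icc n (n + N)).finite_toSet.isClosed_biUnion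
    fun k _ => hF.preimage (hT.iterate k) using 1
  ext y
  simp [and_assoc]

lemma isClosed_syndeticVisitors (hT : Continuous T) (hF : IsClosed F) :
    IsClosed (syndeticVisitors T F N) := by
  simpa only [syndeticVisitors, ofPred_forall] using
    isClosed_iInter (isClosed_setOf_exists_iterate_mem hT hF)

lemma syndeticVisitors_nonempty [CompactSpace Y] (hT : Continuous T) (hF : IsClosed F)
    (h : ∀ n₀, ∃ y, ∀ n ≤ n₀, ∃ k, n ≤ k ∧ k ≤ n + N ∧ T^[k] y ∈ F) :
    (syndeticVisitors T F N).Nonempty := by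
  have := isCompact_univ.inter_iInter_nonempty _
    (isClosed_setOf_exists_iterate_mem (N := N) hT hF) fun u => ?_
  · simpa [syndeticVisitors, ofPred_forall] using this
  obtain ⟨y, hy⟩ := h (u.sup id)
  exact ⟨y, mem_univ y, mem_iInter₂.mpr fun n hn => hy n (Finset.le_sup (f := id) hn)⟩

end SyndeticVisitors

section AlmostPeriodicPoints

variable {Y : Type*} [MetricSpace Y] [CompactSpace Y] {T : Y → Y}

lemma IsMinimalSet.subset_almostPeriodicPts (hT : Continuous T) {M : Set Y}
    (hM : IsMinimalSet T M) : M ⊆ almostPeriodicPts T := by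
  intro p hp U hU hpU
  obtain ⟨t, ht⟩ := hM.prop.2.1.isCompact.elim_finite_subcover _
    (fun k => hU.preimage (hT.iterate k)) (hM.subset_iUnion_preimage_iterate hT hU ⟨p, hp, hpU⟩)
  refine ⟨t.sup id, fun n => ?_⟩
  obtain ⟨k, hkt, hk⟩ := mem_iUnion₂.mp (ht (hM.prop.2.2.iterate n hp))
  refine ⟨k + n, by omega, by have : k ≤ t.sup id := Finset.le_sup (f := id) hkt; omega, ?_⟩
  rwa [Function.iterate_add_apply]

lemma inter_almostPeriodicPts_nonempty (hT : Continuous T) {F : Set Y} (hF : IsClosed F)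
    {N : ℕ} (hne : (syndeticVisitors T F N).Nonempty) : (F ∩ almostPeriodicPts T).Nonempty := by
  obtain ⟨M, hM_sub, hM⟩ := exists_isMinimalSet_subset hne (isClosed_syndeticVisitors hT hF)
    mapsTo_syndeticVisitors
  obtain ⟨z, hz⟩ := hM.prop.1
  obtain ⟨k, -, -, hk⟩ := hM_sub hz 0
  exact ⟨T^[k] z, hk, hM.subset_almostPeriodicPts hT (hM.prop.2.2.iterate k hz)⟩

end AlmostPeriodicPoints

section MeasureCenter

variable {Y : Type*} [MetricSpace Y] {T : Y → Y}

lemma eventually_natCast_lt_mul {g : ℕ → ℕ}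
    (hg : Tendsto (fun n => (g n : ℝ) / n) atTop (𝓝 0)) {c : ℝ≥0∞} (hc : 0 < c) :
    ∀ᶠ n in atTop, (g n : ℝ≥0∞) < n * c := by
  obtain ⟨r, hr_pos, hr_lt⟩ := ENNReal.lt_iff_exists_nnreal_btwn.mp hc
  filter_upwards [hg.eventually_lt_const (show (0 : ℝ) < r by exact_mod_cast hr_pos),
    eventually_gt_atTop 0] with n hn hn_pos
  rw [div_lt_iff₀ (by exact_mod_cast hn_pos)] at hn
  calc (g n : ℝ≥0∞) < n * r := by rw [mul_comm]; exact_mod_cast hn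
    _ ≤ n * c := by gcongr

lemma exists_mem_of_mem_mistakeBall {g : ℕ → ℕ} {w y : Y} {L : ℕ} {δ : ℝ} {S : Set Y}
    (hw : g L < visitCount T w S L) (hy : y ∈ mistakeBall T g w L δ) :
    ∃ i < L, T^[i] w ∈ S ∧ dist (T^[i] w) (T^[i] y) ≤ δ := by
  classical
  obtain ⟨Λ, -, hΛ_card, hΛ_dist⟩ := hy
  have : ¬ (Finset.range L).filter (fun i => T^[i] w ∈ S) ⊆ Finset.range L \ Λ :=
    fun h => (hw.trans_le (Finset.card_le_card h)).not_ge hΛ_card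
  obtain ⟨i, hi, hiΛ⟩ := Finset.not_subset.mp this
  simp only [Finset.mem_filter, Finset.mem_range, Finset.mem_sdiff, not_and, not_not] at hi hiΛ
  exact ⟨i, hi.1, hi.2, hΛ_dist i (hiΛ hi.1)⟩

variable [MeasurableSpace Y] [BorelSpace Y] [CompactSpace Y]

lemma syndeticVisitors_closedBall_nonempty (hT : Continuous T) (hAPP : AlmostProductProperty T)
    {μ : ProbabilityMeasure Y} (hμ : InvariantProb T μ) {x : Y} (hx : x ∈ measSupp μ) {ε : ℝ}
    (hε : 0 < ε) : ∃ N, (syndeticVisitors T (Metric.closedBall x ε) N).Nonempty := by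
  obtain ⟨g, m, -, -, -, hg, -, hglue⟩ := hAPP
  have hδ : 0 < ε / 2 := half_pos hε
  have hB : 0 < (μ : Measure Y) (Metric.ball x (ε / 2)) :=
    hx _ Metric.isOpen_ball (Metric.mem_ball_self hδ)
  obtain ⟨L, hL, hL_gap, hL_pos⟩ := ((eventually_natCast_lt_mul hg hB).and
    ((eventually_ge_atTop (m (ε / 2))).and (eventually_gt_atTop 0))).exists
  obtain ⟨w, hw⟩ := exists_lt_visitCount ⟨hT.measurable, hμ⟩ Metric.isOpen_ball.measurableSet hL
  have h_glued : ∀ k, ∃ y, ∀ j < k + 2, T^[j * L] y ∈ mistakeBall T g w L (ε / 2) := by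
    intro k
    obtain ⟨y, hy⟩ := hglue (k + 2) (fun _ => w) (fun _ => ε / 2) (fun _ => L) (by omega)
      (fun _ _ => hδ) (fun _ _ => hL_gap)
    exact ⟨y, fun j hj => by simpa using mem_iInter₂.mp hy j (Finset.mem_range.mpr hj)⟩
  refine ⟨2 * L, syndeticVisitors_nonempty hT Metric.isClosed_closedBall fun n₀ => ?_⟩
  obtain ⟨y, hy⟩ := h_glued n₀
  refine ⟨y, fun n hn => ?_⟩
  -- the copy of the segment starting at time `(n / L + 1) * L` lies in `[n, n + 2 L]`
  have h_block : n / L + 1 < n₀ + 2 := by have := Nat.div_le_self n L; omega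
  obtain ⟨i, hi, hi_mem, hi_dist⟩ := exists_mem_of_mem_mistakeBall hw (hy _ h_block)
  have h_lt : n < n / L * L + L := Nat.lt_div_mul_add hL_pos
  have h_le : n / L * L ≤ n := Nat.div_mul_le_self n L
  refine ⟨i + (n / L + 1) * L, by nlinarith, by nlinarith, ?_⟩
  rw [Metric.mem_closedBall, Function.iterate_add_apply]
  calc dist (T^[i] (T^[(n / L + 1) * L] y)) x
      ≤ dist (T^[i] w) (T^[i] (T^[(n / L + 1) * L] y)) + dist (T^[i] w) x :=
        dist_triangle_left _ _ _
    _ ≤ ε / 2 + ε / 2 := add_le_add hi_dist (Metric.mem_ball.mp hi_mem).le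
    _ = ε := add_halves ε

lemma measSupp_subset_closure_almostPeriodicPts (hT : Continuous T)
    (hAPP : AlmostProductProperty T) {μ : ProbabilityMeasure Y} (hμ : InvariantProb T μ) :
    measSupp μ ⊆ closure (almostPeriodicPts T) := by
  intro x hx
  refine Metric.mem_closure_iff.mpr fun ε hε => ?_
  obtain ⟨N, hN⟩ := syndeticVisitors_closedBall_nonempty hT hAPP hμ hx (half_pos hε)
  obtain ⟨p, hp_ball, hp⟩ := inter_almostPeriodicPts_nonempty hT Metric.isClosed_closedBall hN
  exact ⟨p, hp, (Metric.mem_closedBall'.mp hp_ball).trans_lt (half_lt_self hε)⟩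

end MeasureCenter

/-- Under the almost product property, the measure center equals the
closure of the set of almost periodic points. -/
theorem measureCenter_eq_closure_almostPeriodic [CompactSpace X]
    (T : X → X) (hT : Continuous T) (hAPP : AlmostProductProperty T) :
    measureCenter T = closure (almostPeriodicPts T) := by
  refine (closure_minimal ?_ isClosed_closure).antisymm (closure_minimal ?_ isClosed_closure)
  · exact iUnion₂_subset fun μ hμ => measSupp_subset_closure_almostPeriodicPts hT hAPP hμ
  · intro x hx
    obtain ⟨μ, hμ, hxμ⟩ := exists_invariantProb_mem_measSupp hT hx
    exact subset_closure (mem_iUnion₂.mpr ⟨μ, hμ, hxμ⟩)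
end

section
/- Let Z be any subset of a compact metric space X with continuous T, and let M(X) be the space of Borel probability measures. Then the packing topological entropy satisfies h_top^P(T,Z) ≥ sup{ \bar{h}_μ(T) : μ ∈ M(X), μ is Borel with μ(Z) = 1 and Z Borel }, where \bar{h}_μ(T) = ∫ \bar{h}_μ(T,x) dμ(x) is the upper local (Brin–Katok) entropy of μ. -/
open Filter MeasureTheory Topology
open scoped ENNReal

variable {X : Type*} [MetricSpace X]


/-- The (open) Bowen ball of length `n` and radius `ε`. -/
def bowenBall (T : X → X) (x : X) (n : ℕ) (ε : ℝ) : Set X :=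
  {y | ∀ i < n, dist (T^[i] x) (T^[i] y) < ε}

/-- The closed Bowen ball of length `n` and radius `ε`. -/
def closedBowenBall (T : X → X) (x : X) (n : ℕ) (ε : ℝ) : Set X :=
  {y | ∀ i < n, dist (T^[i] x) (T^[i] y) ≤ ε}

/-- `E` is an `(n,ε)`-separated set for `T`. -/
def IsSep (T : X → X) (n : ℕ) (ε : ℝ) (E : Finset X) : Prop :=
  ∀ x ∈ E, ∀ y ∈ E, x ≠ y → ∃ i < n, ε < dist (T^[i] x) (T^[i] y)

/-- Maximal cardinality of an `(n,ε)`-separated subset of `Z`. -/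
noncomputable def sepNum (T : X → X) (Z : Set X) (n : ℕ) (ε : ℝ) : ℕ :=
  sSup {k | ∃ E : Finset X, ↑E ⊆ Z ∧ IsSep T n ε E ∧ E.card = k}

/-- Upper capacity topological entropy of `T` on `Z`. -/
noncomputable def ucEntropy (T : X → X) (Z : Set X) : EReal :=
  ⨆ (ε : ℝ) (_ : 0 < ε),
    Filter.limsup (fun n : ℕ => ((Real.log (sepNum T Z n ε) / n : ℝ) : EReal)) Filter.atTop

/-- The Carathéodory sum `M^s_{N,ε}(Z)` for Bowen entropy. -/
noncomputable def bowenM (T : X → X) (Z : Set X) (s : ℝ) (N : ℕ) (ε : ℝ) : ℝ≥0∞ :=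
  ⨅ (c : Set (X × ℕ)) (_ : c.Countable ∧ (∀ p ∈ c, N ≤ p.2) ∧
      Z ⊆ ⋃ p ∈ c, bowenBall T p.1 p.2 ε),
    ∑' p : c, ENNReal.ofReal (Real.exp (-s * ((p : X × ℕ).2 : ℝ)))

/-- `M^s_ε(Z) = lim_N M^s_{N,ε}(Z)` (the limit is the supremum by monotonicity). -/
noncomputable def bowenMs (T : X → X) (Z : Set X) (s : ℝ) (ε : ℝ) : ℝ≥0∞ :=
  ⨆ N : ℕ, bowenM T Z s N ε

/-- Bowen topological entropy of `T` on `Z`. -/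
noncomputable def bowenEntropy (T : X → X) (Z : Set X) : EReal :=
  ⨆ (ε : ℝ) (_ : 0 < ε), sInf ((fun s : ℝ => (s : EReal)) '' {s : ℝ | bowenMs T Z s ε = 0})

/-- The packing pre-sum `P^s_{N,ε}(Z)`, a supremum over disjoint families of closed
Bowen balls with centers in `Z` and lengths at least `N`. -/
noncomputable def packP (T : X → X) (Z : Set X) (s : ℝ) (N : ℕ) (ε : ℝ) : ℝ≥0∞ :=
  ⨆ (c : Set (X × ℕ)) (_ : c.Countable ∧ (∀ p ∈ c, p.1 ∈ Z ∧ N ≤ p.2) ∧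
      c.PairwiseDisjoint (fun p => closedBowenBall T p.1 p.2 ε)),
    ∑' p : c, ENNReal.ofReal (Real.exp (-s * ((p : X × ℕ).2 : ℝ)))

/-- `P^s_ε(Z) = lim_N P^s_{N,ε}(Z)` (the limit is the infimum by monotonicity). -/
noncomputable def packPre (T : X → X) (Z : Set X) (s : ℝ) (ε : ℝ) : ℝ≥0∞ :=
  ⨅ N : ℕ, packP T Z s N ε

/-- The packing outer quantity `𝒫^s_ε(Z)`. -/
noncomputable def packM (T : X → X) (Z : Set X) (s : ℝ) (ε : ℝ) : ℝ≥0∞ :=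
  ⨅ (c : ℕ → Set X) (_ : Z ⊆ ⋃ i, c i), ∑' i, packPre T (c i) s ε

/-- Packing topological entropy of `T` on `Z`. -/
noncomputable def packEntropy (T : X → X) (Z : Set X) : EReal :=
  ⨆ (ε : ℝ) (_ : 0 < ε), sInf ((fun s : ℝ => (s : EReal)) '' {s : ℝ | packM T Z s ε = 0})
variable [MeasurableSpace X] [BorelSpace X]

/-- The Brin–Katok upper local entropy of `μ` at `x`. -/
noncomputable def upperLocalEntropy (T : X → X) (μ : ProbabilityMeasure X) (x : X) :
    ℝ≥0∞ :=
  ⨆ (ε : ℝ) (_ : 0 < ε),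
    Filter.limsup
      (fun n : ℕ =>
        ENNReal.ofReal (-(Real.log ((μ.toMeasure (bowenBall T x n ε)).toReal)) / n))
      Filter.atTop


/-! If `h̄_μ(T, ·) > t` on a subset of `Z` of positive measure, then for some `ε₀` a set `B ⊆ Z`
of positive measure consists of points whose `ε₀`-Bowen balls have mass at most `e^{-tn}` for
infinitely many `n`. For each length `n ≥ N`, a maximal disjoint family of closed `ε₀/3`-Bowen
balls centred at the points of `B` with this property at `n` has `ε₀`-balls covering them, so
their mass is at most `P^s_{N,ε₀/3} · e^{(s-t)n}`. Summing over `n ≥ N` gives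
`μ(E ∩ B) (1 - e^{s-t}) ≤ P^s_{ε₀/3}(E)` for every `E`, hence `μ(B) (1 - e^{s-t}) ≤ 𝒫^s_{ε₀/3}(Z)`,
which is positive when `s < t`. -/

variable {Y : Type*} [MetricSpace Y]

section BowenBall

variable {T : Y → Y} {x : Y} {n : ℕ}

lemma mem_bowenBall_self {ε : ℝ} (hε : 0 < ε) : x ∈ bowenBall T x n ε :=
  fun _ _ => by simpa using hε

lemma bowenBall_mono {ε ε' : ℝ} (h : ε ≤ ε') : bowenBall T x n ε ⊆ bowenBall T x n ε' :=
  fun _ hy i hi => (hy i hi).trans_le h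

lemma bowenBall_subset_closedBowenBall (ε : ℝ) : bowenBall T x n ε ⊆ closedBowenBall T x n ε :=
  fun _ hy i hi => (hy i hi).le

lemma isOpen_bowenBall (hT : Continuous T) (ε : ℝ) :
    IsOpen (bowenBall T x n ε) := by
  have h : bowenBall T x n ε = ⋂ i ∈ Finset.range n, T^[i] ⁻¹' Metric.ball (T^[i] x) ε := by
    ext y
    simp [bowenBall, Metric.mem_ball, dist_comm]
  rw [h]
  exact isOpen_biInter_finset fun i _ => Metric.isOpen_ball.preimage (hT.iterate i)

lemma mem_bowenBall_of_not_disjoint {y : Y} {ε ε₀ : ℝ} (hε : 2 * ε < ε₀)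
    (h : ¬Disjoint (closedBowenBall T x n ε) (closedBowenBall T y n ε)) :
    y ∈ bowenBall T x n ε₀ := by
  obtain ⟨z, hzx, hzy⟩ := Set.not_disjoint_iff.1 h
  intro i hi
  calc dist (T^[i] x) (T^[i] y) ≤ dist (T^[i] x) (T^[i] z) + dist (T^[i] y) (T^[i] z) :=
        dist_triangle_right _ _ _
    _ ≤ ε + ε := add_le_add (hzx i hi) (hzy i hi)
    _ < ε₀ := by linarith

lemma exists_pairwiseDisjoint_closedBowenBall_cover (F : Set Y) {ε ε₀ : ℝ} (hε : 0 ≤ ε)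
    (hεε₀ : 2 * ε < ε₀) :
    ∃ S ⊆ F, S.PairwiseDisjoint (fun x => closedBowenBall T x n ε) ∧
      F ⊆ ⋃ x ∈ S, bowenBall T x n ε₀ := by
  let 𝒮 : Set (Set Y) := {S | S ⊆ F ∧ S.PairwiseDisjoint fun x => closedBowenBall T x n ε}
  obtain ⟨S, hS⟩ := zorn_subset 𝒮 fun c hc hchain =>
    ⟨⋃₀ c, ⟨Set.sUnion_subset fun s hs => (hc hs).1,
      (Set.pairwiseDisjoint_sUnion hchain.directedOn).2 fun s hs => (hc hs).2⟩,
      fun _ => Set.subset_sUnion_of_mem⟩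
  refine ⟨S, hS.prop.1, hS.prop.2, fun y hy => ?_⟩
  by_contra hyS
  have hdisj : ∀ x ∈ S, Disjoint (closedBowenBall T y n ε) (closedBowenBall T x n ε) :=
    fun x hx => by_contra fun h =>
      hyS (Set.mem_biUnion hx (mem_bowenBall_of_not_disjoint hεε₀ fun h' => h h'.symm))
  have hyS' : y ∈ S := hS.mem_of_prop_insert
    ⟨Set.insert_subset hy hS.prop.1, hS.prop.2.insert fun x hx _ => hdisj x hx⟩
  exact hyS (Set.mem_biUnion hyS' (mem_bowenBall_self (by linarith)))

end BowenBall

section Packing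

variable {T : Y → Y}

lemma antitone_packP (Z : Set Y) (N : ℕ) (ε : ℝ) :
    Antitone fun s => packP T Z s N ε := fun _ _ h => by
  refine iSup₂_mono fun _ _ => ENNReal.tsum_le_tsum fun _ => ?_
  gcongr

lemma antitone_packM (Z : Set Y) (ε : ℝ) : Antitone fun s => packM T Z s ε :=
  fun _ _ h => iInf₂_mono fun _ _ => ENNReal.tsum_le_tsum fun _ =>
    iInf_mono fun N => antitone_packP _ N ε h

lemma le_packEntropy_of_packM_ne_zero {Z : Set Y} {s ε : ℝ} (hε : 0 < ε)
    (h : packM T Z s ε ≠ 0) : (s : EReal) ≤ packEntropy T Z := by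
  refine le_iSup₂_of_le ε hε (le_sInf ?_)
  rintro _ ⟨u, hu, rfl⟩
  by_contra! hus
  exact h (le_zero_iff.1 (hu ▸ antitone_packM Z ε (EReal.coe_lt_coe_iff.1 hus).le))

lemma tsum_le_packP {E S : Set Y} {s ε : ℝ} {n N : ℕ} (hSE : S ⊆ E) (hS : S.Countable)
    (hdisj : S.PairwiseDisjoint fun x => closedBowenBall T x n ε) (hN : N ≤ n) :
    ∑' _ : S, ENNReal.ofReal (Real.exp (-s * n)) ≤ packP T E s N ε := by
  have hinj : Set.InjOn (fun x : Y => (x, n)) S := fun _ _ _ _ h => congrArg Prod.fst h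
  rw [← tsum_image (fun p : Y × ℕ => ENNReal.ofReal (Real.exp (-s * p.2))) hinj]
  unfold packP
  refine le_iSup₂_of_le ((fun x : Y => (x, n)) '' S) ⟨hS.image _, ?_, ?_⟩ le_rfl
  · rintro _ ⟨x, hx, rfl⟩
    exact ⟨hSE hx, hN⟩
  · rintro _ ⟨x, hx, rfl⟩ _ ⟨y, hy, rfl⟩ hxy
    exact hdisj hx hy fun h => hxy (h ▸ rfl)

lemma one_le_packM {Z : Set Y} {z : Y} (hz : z ∈ Z) (ε : ℝ) : 1 ≤ packM T Z 0 ε := by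
  refine le_iInf₂ fun c hc => ?_
  obtain ⟨i, hi⟩ := Set.mem_iUnion.1 (hc hz)
  refine le_trans (le_iInf fun N => ?_) (ENNReal.le_tsum i)
  simpa using tsum_le_packP (T := T) (s := 0) (ε := ε) (Set.singleton_subset_iff.2 hi)
    (Set.countable_singleton z) (Set.pairwiseDisjoint_singleton _ _) le_rfl

lemma zero_le_packEntropy {Z : Set Y} (hZ : Z.Nonempty) : 0 ≤ packEntropy T Z := by
  obtain ⟨z, hz⟩ := hZ
  exact_mod_cast le_packEntropy_of_packM_ne_zero one_pos
    (one_pos.trans_le (one_le_packM (T := T) hz 1)).ne'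

variable [TopologicalSpace.SeparableSpace Y] [MeasurableSpace Y] (μ : Measure Y)

lemma measure_le_packP_mul (hT : Continuous T) {E F : Set Y} {s t ε ε₀ : ℝ} (hε : 0 < ε)
    (hεε₀ : 2 * ε < ε₀) (hFE : F ⊆ E) {n N : ℕ} (hN : N ≤ n)
    (hF : ∀ x ∈ F, μ (bowenBall T x n ε₀) ≤ ENNReal.ofReal (Real.exp (-t * n))) :
    μ F ≤ packP T E s N ε * ENNReal.ofReal (Real.exp (s - t)) ^ n := by
  obtain ⟨S, hSF, hdisj, hcover⟩ := exists_pairwiseDisjoint_closedBowenBall_cover F hε.le hεε₀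
  have hS : S.Countable :=
    (hdisj.mono fun x => bowenBall_subset_closedBowenBall ε).countable_of_isOpen
      (fun x _ => isOpen_bowenBall (x := x) (n := n) hT ε) fun x _ => ⟨x, mem_bowenBall_self hε⟩
  have hexp : ENNReal.ofReal (Real.exp (-t * n)) =
      ENNReal.ofReal (Real.exp (-s * n)) * ENNReal.ofReal (Real.exp (s - t)) ^ n := by
    rw [← ENNReal.ofReal_pow (Real.exp_nonneg _), ← Real.exp_nat_mul,
      ← ENNReal.ofReal_mul (Real.exp_nonneg _), ← Real.exp_add]
    ring_nf
  calc μ F ≤ ∑' x : S, μ (bowenBall T x n ε₀) :=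
        (measure_mono hcover).trans (measure_biUnion_le μ hS _)
    _ ≤ ∑' _ : S, ENNReal.ofReal (Real.exp (-t * n)) :=
        ENNReal.tsum_le_tsum fun x => hF x (hSF x.2)
    _ = (∑' _ : S, ENNReal.ofReal (Real.exp (-s * n))) * ENNReal.ofReal (Real.exp (s - t)) ^ n :=
        by rw [hexp, ENNReal.tsum_mul_right]
    _ ≤ packP T E s N ε * ENNReal.ofReal (Real.exp (s - t)) ^ n := by
        gcongr
        exact tsum_le_packP (hSF.trans hFE) hS hdisj hN

lemma measure_inter_mul_le_packPre (hT : Continuous T) {B : Set Y} {s t ε ε₀ : ℝ} (hε : 0 < ε)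
    (hεε₀ : 2 * ε < ε₀)
    (hB : ∀ x ∈ B, ∃ᶠ n in atTop, μ (bowenBall T x n ε₀) ≤ ENNReal.ofReal (Real.exp (-t * n)))
    (E : Set Y) :
    μ (E ∩ B) * (1 - ENNReal.ofReal (Real.exp (s - t))) ≤ packPre T E s ε := by
  refine le_iInf fun N => ENNReal.mul_le_of_le_div ?_
  let F : ℕ → Set Y := fun n =>
    {x | x ∈ E ∧ N ≤ n ∧ μ (bowenBall T x n ε₀) ≤ ENNReal.ofReal (Real.exp (-t * n))}
  have hcover : E ∩ B ⊆ ⋃ n, F n := fun x hx => by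
    obtain ⟨n, hn, hball⟩ := (hB x hx.2).forall_exists_of_atTop N
    exact Set.mem_iUnion.2 ⟨n, hx.1, hn, hball⟩
  have hF : ∀ n, μ (F n) ≤ packP T E s N ε * ENNReal.ofReal (Real.exp (s - t)) ^ n := by
    intro n
    by_cases hn : N ≤ n
    · exact measure_le_packP_mul μ hT hε hεε₀ (fun x hx => hx.1) hn fun x hx => hx.2.2
    · simp [F, hn]
  calc μ (E ∩ B) ≤ ∑' n, μ (F n) := (measure_mono hcover).trans (measure_iUnion_le _)
    _ ≤ ∑' n, packP T E s N ε * ENNReal.ofReal (Real.exp (s - t)) ^ n := ENNReal.tsum_le_tsum hF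
    _ = packP T E s N ε / (1 - ENNReal.ofReal (Real.exp (s - t))) := by
        rw [ENNReal.tsum_mul_left, ENNReal.tsum_geometric, div_eq_mul_inv]

lemma measure_inter_mul_le_packM (hT : Continuous T) {B : Set Y} {s t ε ε₀ : ℝ} (hε : 0 < ε)
    (hεε₀ : 2 * ε < ε₀)
    (hB : ∀ x ∈ B, ∃ᶠ n in atTop, μ (bowenBall T x n ε₀) ≤ ENNReal.ofReal (Real.exp (-t * n)))
    (Z : Set Y) :
    μ (Z ∩ B) * (1 - ENNReal.ofReal (Real.exp (s - t))) ≤ packM T Z s ε := by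
  refine le_iInf₂ fun c hc => ?_
  have hZB : Z ∩ B ⊆ ⋃ i, c i ∩ B :=
    (Set.inter_subset_inter_left B hc).trans (Set.iUnion_inter B c).le
  calc μ (Z ∩ B) * (1 - ENNReal.ofReal (Real.exp (s - t)))
      ≤ (∑' i, μ (c i ∩ B)) * (1 - ENNReal.ofReal (Real.exp (s - t))) := by
        gcongr
        exact (measure_mono hZB).trans (measure_iUnion_le _)
    _ = ∑' i, μ (c i ∩ B) * (1 - ENNReal.ofReal (Real.exp (s - t))) := ENNReal.tsum_mul_right.symm
    _ ≤ ∑' i, packPre T (c i) s ε :=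
        ENNReal.tsum_le_tsum fun i => measure_inter_mul_le_packPre μ hT hε hεε₀ hB (c i)

end Packing

lemma measure_setOf_lt_ne_zero_of_lt_lintegral {α : Type*} [MeasurableSpace α] {ν : Measure α}
    [IsProbabilityMeasure ν] {f : α → ℝ≥0∞} {c : ℝ≥0∞} (h : c < ∫⁻ x, f x ∂ν) :
    ν {x | c < f x} ≠ 0 := by
  intro h0
  have hle : ∀ᵐ x ∂ν, f x ≤ c :=
    (measure_eq_zero_iff_ae_notMem.1 h0).mono fun x hx => not_lt.1 hx
  refine (lintegral_mono_ae hle).not_gt ?_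
  simpa using h

section LocalEntropy

variable [MeasurableSpace Y] {T : Y → Y} {μ : ProbabilityMeasure Y}

lemma exists_frequently_measure_bowenBall_le {x : Y} {t : ℝ}
    (ht : ENNReal.ofReal t < upperLocalEntropy T μ x) :
    ∃ ε > 0, ∃ᶠ n in atTop,
      μ.toMeasure (bowenBall T x n ε) ≤ ENNReal.ofReal (Real.exp (-t * n)) := by
  obtain ⟨ε, hε, hlim⟩ : ∃ ε > 0, ENNReal.ofReal t < limsup (fun n : ℕ => ENNReal.ofReal
      (-Real.log (μ.toMeasure (bowenBall T x n ε)).toReal / n)) atTop := by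
    simpa only [upperLocalEntropy, lt_iSup_iff, exists_prop] using ht
  refine ⟨ε, hε, (frequently_lt_of_lt_limsup (by isBoundedDefault) hlim).mono fun n hn => ?_⟩
  set m := (μ.toMeasure (bowenBall T x n ε)).toReal
  obtain ⟨htn, hpos⟩ := ENNReal.ofReal_lt_ofReal_iff'.1 hn
  have hn0 : (0 : ℝ) < n := by
    rcases Nat.eq_zero_or_pos n with h | h
    · simp [h] at hpos
    · exact_mod_cast h
  have hlog : Real.log m ≤ -t * n := by
    rw [lt_div_iff₀ hn0] at htn
    linarith
  rw [ENNReal.le_ofReal_iff_toReal_le (measure_ne_top _ _) (Real.exp_nonneg _)]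
  exact (Real.le_exp_log m).trans (Real.exp_le_exp.2 hlog)

lemma coe_le_packEntropy_of_measure_ne_zero [TopologicalSpace.SeparableSpace Y]
    (hT : Continuous T) {Z : Set Y} {s t : ℝ} (hst : s < t)
    (h : μ.toMeasure (Z ∩ {x | ENNReal.ofReal t < upperLocalEntropy T μ x}) ≠ 0) :
    (s : EReal) ≤ packEntropy T Z := by
  let B : ℕ → Set Y := fun k => {x | ∃ᶠ n in atTop,
    μ.toMeasure (bowenBall T x n (1 / (k + 1))) ≤ ENNReal.ofReal (Real.exp (-t * n))}
  have hcover : {x | ENNReal.ofReal t < upperLocalEntropy T μ x} ⊆ ⋃ k, B k := fun x hx => by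
    obtain ⟨ε, hε, hfreq⟩ := exists_frequently_measure_bowenBall_le hx
    obtain ⟨k, hk⟩ := exists_nat_one_div_lt hε
    exact Set.mem_iUnion.2 ⟨k, hfreq.mono fun n hn => (measure_mono (bowenBall_mono hk.le)).trans hn⟩
  obtain ⟨k, hk⟩ : ∃ k, μ.toMeasure (Z ∩ B k) ≠ 0 := by
    by_contra! h0
    exact h (measure_mono_null ((Set.inter_subset_inter_right Z hcover).trans
      (Set.inter_iUnion Z B).le) (measure_iUnion_null h0))
  have hgap : 1 - ENNReal.ofReal (Real.exp (s - t)) ≠ 0 :=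
    (tsub_pos_of_lt (ENNReal.ofReal_lt_one.2 (Real.exp_lt_one_iff.2 (by linarith)))).ne'
  set ε₀ : ℝ := 1 / (k + 1)
  have hε₀ : 0 < ε₀ := by positivity
  refine le_packEntropy_of_packM_ne_zero (ε := ε₀ / 3) (by positivity) fun h0 => ?_
  have hle := measure_inter_mul_le_packM (s := s) (ε := ε₀ / 3) μ.toMeasure hT
    (by positivity) (by linarith) (B := B k) (fun x hx => hx) Z
  rw [h0] at hle
  exact mul_ne_zero hk hgap (le_zero_iff.1 hle)

end LocalEntropy

/-- For a Borel set `Z`, the packing entropy of `T` on `Z` dominates the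
upper local (Brin–Katok) entropy `∫ h̄_μ(T,x) dμ` of every Borel probability measure `μ`
with `μ(Z) = 1`. -/
theorem upperLocalEntropy_le_packEntropy [CompactSpace X]
    (T : X → X) (hT : Continuous T) (Z : Set X) (hZ : MeasurableSet Z)
    (μ : ProbabilityMeasure X) (hμZ : μ.toMeasure Z = 1) :
    ((∫⁻ x, upperLocalEntropy T μ x ∂μ.toMeasure : ℝ≥0∞) : EReal) ≤ packEntropy T Z := by
  have hZne : Z.Nonempty := nonempty_of_measure_ne_zero (μ := μ.toMeasure) (by simp [hμZ])
  refine EReal.ge_of_forall_gt_iff_ge.1 fun z hz => ?_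
  rcases lt_or_ge z 0 with hz0 | hz0
  · exact (EReal.coe_lt_coe_iff.2 hz0).le.trans (zero_le_packEntropy hZne)
  have hz' : ENNReal.ofReal z < ∫⁻ x, upperLocalEntropy T μ x ∂μ.toMeasure := by
    rwa [← EReal.coe_ennreal_lt_coe_ennreal_iff, EReal.coe_ennreal_ofReal, max_eq_left hz0]
  obtain ⟨t, -, hzt, ht⟩ := ENNReal.lt_iff_exists_real_btwn.1 hz'
  have hZc : μ.toMeasure Zᶜ = 0 := (prob_compl_eq_zero_iff hZ).2 hμZ
  refine coe_le_packEntropy_of_measure_ne_zero (μ := μ) hT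
    (ENNReal.ofReal_lt_ofReal_iff'.1 hzt).1 ?_
  rw [Set.inter_comm, measure_inter_conull hZc]
  exact measure_setOf_lt_ne_zero_of_lt_lintegral ht
end
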